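/- Let G be a finite simple chordal graph, i.e., a graph with no induced cycle of length four or more. Then κ*(G) + 1 = δ*(G) + 1 = ω(G), where κ* is the subgraph connectivity number, δ* is the degeneracy number, and ω(G) is the clique number of G; consequently the Gaussian rank of G satisfies r(G) = ω(G). -/

import Mathlib

/-!
By Dirac's lemma a chordal graph has a perfect elimination ordering: every minimal separator
between two non-adjacent vertices is a clique (two non-adjacent vertices of it would close up
an induced cycle through the two sides), and induction on the side of a minimal separator
yields, in every nonempty vertex set `s`, a vertex whose neighbourhood in `s` is a clique.

Hence every subgraph has a vertex of degree at most `ω - 1`, so `κ* ≤ δ* ≤ ω - 1`, and a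
maximum clique attains `ω - 1` for both. The same ordering completes a matrix `A` that is positive
definite on every clique to a positive definite matrix matching `A` on `G`, bordering one row
and column at a time with the Schur complement of `A` on the clique `{v} ∪ N(v)` as new pivot;
a rank-`ω` matrix in general position is positive definite on every set of at most `ω` vertices,
so `r(G) ≤ ω`. Conversely, a Vandermonde Gram matrix of rank `r < ω` is in general position but
has singular `(r + 1)`-minors, which no positive definite matrix can match on an `(r + 1)`-clique.
-/

open Matrix MeasureTheory

/-- Two matrices match on a graph `G`: equal diagonals and equal entries on all edges. -/
def MatchOn {V : Type*} (G : SimpleGraph V) (A B : Matrix V V ℝ) : Prop :=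
  (∀ i, A i i = B i i) ∧ ∀ i j, G.Adj i j → A i j = B i j

/-- A real symmetric positive semidefinite matrix of rank `d` is in general position if
every `d × d` principal submatrix is nonsingular. -/
def InGenPos {V : Type*} [Fintype V] [DecidableEq V] (A : Matrix V V ℝ) (d : ℕ) : Prop :=
  A.PosSemidef ∧ A.rank = d ∧
    ∀ α : Finset V, α.card = d →
      (A.submatrix (fun i : α => (i : V)) (fun i : α => (i : V))).det ≠ 0

/-- The defining property of the Gaussian rank at level `r`. -/
def GRankProp {V : Type*} [Fintype V] [DecidableEq V] (G : SimpleGraph V) (r : ℕ) : Prop :=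
  ∀ A : Matrix V V ℝ, InGenPos A r → ∃ P : Matrix V V ℝ, P.PosDef ∧ MatchOn G P A

/-- The Gaussian rank of a graph. -/
noncomputable def gaussianRank {V : Type*} [Fintype V] [DecidableEq V]
    (G : SimpleGraph V) : ℕ :=
  sInf {r : ℕ | 0 < r ∧ GRankProp G r}

/-- Vertex connectivity: the least size of a vertex set whose deletion disconnects the
graph or leaves at most one vertex. -/
noncomputable def vertexConn {V : Type*} (G : SimpleGraph V) : ℕ :=
  sInf {k : ℕ | ∃ S : Set V, S.ncard = k ∧
    (¬ (G.induce Sᶜ).Connected ∨ Sᶜ.ncard ≤ 1)}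

/-- Subgraph connectivity number: the maximum vertex connectivity over all subgraphs. -/
noncomputable def subgraphConn {V : Type*} (G : SimpleGraph V) : ℕ :=
  sSup {k : ℕ | ∃ H : G.Subgraph, vertexConn H.coe = k}

/-- Minimum degree of a graph. -/
noncomputable def minDeg {V : Type*} (G : SimpleGraph V) : ℕ :=
  sInf {k : ℕ | ∃ v, (G.neighborSet v).ncard = k}

/-- Degeneracy number: the maximum over all subgraphs of the minimum degree. -/
noncomputable def degeneracy {V : Type*} (G : SimpleGraph V) : ℕ :=
  sSup {k : ℕ | ∃ H : G.Subgraph, minDeg H.coe = k}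

namespace Matrix

section PosDefOn

variable {V : Type*}

lemma IsHermitian.apply_comm {A : Matrix V V ℝ} (hA : A.IsHermitian) (i j : V) :
    A i j = A j i := by
  simpa using (hA.apply i j).symm

lemma exists_support_subset_restrict_eq {s : Finset V} (y : s → ℝ) :
    ∃ x : V → ℝ, Function.support x ⊆ s ∧ (fun i : s => x i) = y := by
  classical
  refine ⟨fun i => if h : i ∈ s then y ⟨i, h⟩ else 0, fun i hi => ?_, by simp⟩
  by_contra h
  exact hi (dif_neg h)

variable [Fintype V]

def PosDefOn (A : Matrix V V ℝ) (s : Set V) : Prop :=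
  ∀ x : V → ℝ, x ≠ 0 → Function.support x ⊆ s → 0 < x ⬝ᵥ (A *ᵥ x)

lemma PosDefOn.mono {A : Matrix V V ℝ} {s t : Set V} (h : PosDefOn A t) (hst : s ⊆ t) :
    PosDefOn A s :=
  fun x hx hxs => h x hx (hxs.trans hst)

lemma dotProduct_congr_of_support_subset {s : Set V} {x y z : V → ℝ}
    (hx : Function.support x ⊆ s) (h : ∀ i ∈ s, y i = z i) : x ⬝ᵥ y = x ⬝ᵥ z := by
  refine Finset.sum_congr rfl fun i _ => ?_
  by_cases hi : i ∈ s
  · rw [h i hi]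
  · simp [Function.notMem_support.mp (fun h => hi (hx h))]

lemma dotProduct_restrict {s : Finset V} {x : V → ℝ} (hx : Function.support x ⊆ s)
    (y : V → ℝ) : (fun i : s => x i) ⬝ᵥ (fun i : s => y i) = x ⬝ᵥ y := by
  simp only [dotProduct]
  rw [Finset.sum_coe_sort s (fun i => x i * y i)]
  refine Finset.sum_subset (Finset.subset_univ s) fun i _ hi => ?_
  simp [Function.notMem_support.mp (fun h => hi (hx h))]

lemma submatrix_mulVec_restrict (A : Matrix V V ℝ) {s : Finset V} {x : V → ℝ}
    (hx : Function.support x ⊆ s) :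
    A.submatrix ((↑) : s → V) (↑) *ᵥ (fun i : s => x i) = fun i : s => (A *ᵥ x) i := by
  ext i
  simp only [mulVec, submatrix_apply]
  rw [dotProduct_comm, dotProduct_restrict hx, dotProduct_comm]

lemma dotProduct_mulVec_restrict (A : Matrix V V ℝ) {s : Finset V} {x : V → ℝ}
    (hx : Function.support x ⊆ s) :
    (fun i : s => x i) ⬝ᵥ (A.submatrix (↑) (↑) *ᵥ fun i : s => x i) =
      x ⬝ᵥ (A *ᵥ x) := by
  rw [submatrix_mulVec_restrict A hx, dotProduct_restrict hx]

variable [DecidableEq V]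

lemma posDefOn_iff_posDef_submatrix {A : Matrix V V ℝ} (hA : A.IsHermitian) (s : Finset V) :
    PosDefOn A s ↔ (A.submatrix ((↑) : s → V) (↑)).PosDef := by
  refine ⟨fun h => PosDef.of_dotProduct_mulVec_pos (hA.submatrix _) fun y hy => ?_,
    fun h x hx hxs => ?_⟩
  · obtain ⟨x, hxs, rfl⟩ := exists_support_subset_restrict_eq y
    have hx : x ≠ 0 := by rintro rfl; exact hy rfl
    simpa [dotProduct_mulVec_restrict A hxs] using h x hx hxs
  · have hy : (fun i : s => x i) ≠ 0 := fun h0 => hx <| funext fun i => by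
      by_cases hi : i ∈ s
      · exact congrFun h0 ⟨i, hi⟩
      · exact Function.notMem_support.mp fun h => hi (hxs h)
    simpa [dotProduct_mulVec_restrict A hxs] using h.dotProduct_mulVec_pos hy

lemma PosDefOn.exists_mulVec_eq {A : Matrix V V ℝ} (hA : A.IsHermitian) {C : Finset V}
    (h : PosDefOn A C) (c : V → ℝ) :
    ∃ b : V → ℝ, Function.support b ⊆ C ∧ ∀ y ∈ C, (A *ᵥ b) y = c y := by
  have hunit := ((posDefOn_iff_posDef_submatrix hA C).mp h).isUnit
  obtain ⟨b₀, hb₀⟩ := mulVec_surjective_iff_isUnit.mpr hunit fun i : C => c i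
  obtain ⟨b, hbC, rfl⟩ := exists_support_subset_restrict_eq b₀
  refine ⟨b, hbC, fun y hy => ?_⟩
  rw [submatrix_mulVec_restrict A hbC] at hb₀
  exact congrFun hb₀ ⟨y, hy⟩

/-- `A v v - b ⬝ᵥ A *ᵥ b` is the Schur complement of `A` on `C` in `A` on `insert v C`. -/
lemma PosDefOn.dotProduct_mulVec_lt {A : Matrix V V ℝ} (hA : A.IsHermitian) {v : V}
    {C : Finset V} (h : PosDefOn A (insert v ↑C)) (hvC : v ∉ C) {b : V → ℝ}
    (hbC : Function.support b ⊆ C) (hAb : ∀ y ∈ C, (A *ᵥ b) y = A y v) :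
    b ⬝ᵥ (A *ᵥ b) < A v v := by
  have hbv : b v = 0 := Function.notMem_support.mp fun h => hvC (hbC h)
  have hbA : b ⬝ᵥ (A *ᵥ Pi.single v 1) = b ⬝ᵥ (A *ᵥ b) :=
    dotProduct_congr_of_support_subset hbC fun y hy => by simp [hAb y hy]
  have hAbv : (A *ᵥ b) v = b ⬝ᵥ (A *ᵥ Pi.single v 1) := by
    rw [mulVec_single_one]
    simp only [mulVec, dotProduct, col_apply]
    exact Finset.sum_congr rfl fun z _ => by rw [hA.apply_comm, mul_comm]
  have hx : Pi.single v 1 - b ≠ 0 := fun h0 => by simpa [hbv] using congrFun h0 v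
  have hxs : Function.support (Pi.single v 1 - b) ⊆ insert v ↑C := by
    intro i hi
    by_contra hiC
    simp only [Set.mem_insert_iff, Finset.mem_coe, not_or] at hiC
    exact hi (by simp [hiC.1, Function.notMem_support.mp fun h => hiC.2 (hbC h)])
  have hpos := h _ hx hxs
  rw [sub_dotProduct, mulVec_sub, dotProduct_sub, dotProduct_sub, hbA, single_dotProduct,
    single_dotProduct, hAbv, hbA, mulVec_single_one] at hpos
  simp only [col_apply, one_mul] at hpos
  linarith

end PosDefOn

lemma transpose_mul_mul_apply {m n R : Type*} [Fintype m] [Fintype n] [CommSemiring R]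
    (N : Matrix m n R) (P : Matrix m m R) (x y : n) :
    (Nᵀ * P * N) x y = Nᵀ x ⬝ᵥ (P *ᵥ Nᵀ y) := by
  simp only [mul_apply, mulVec, dotProduct, transpose_apply, Finset.sum_mul, Finset.mul_sum]
  rw [Finset.sum_comm]
  exact Finset.sum_congr rfl fun _ _ => Finset.sum_congr rfl fun _ _ => by ring

section Border

variable {V : Type*} [DecidableEq V]

lemma transpose_updateCol_one_apply (v : V) (b : V → ℝ) (x : V) :
    ((1 : Matrix V V ℝ).updateCol v b)ᵀ x = if x = v then b else Pi.single x 1 := by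
  ext j
  by_cases hx : x = v <;> simp [one_apply, Pi.single_apply, hx, eq_comm]

variable [Fintype V]

lemma updateCol_one_mulVec_of_apply_eq_zero (v : V) (b : V → ℝ) {x : V → ℝ} (hx : x v = 0) :
    (1 : Matrix V V ℝ).updateCol v b *ᵥ x = x := by
  calc (1 : Matrix V V ℝ).updateCol v b *ᵥ x = 1 *ᵥ x := by
        ext j
        refine Finset.sum_congr rfl fun k _ => ?_
        by_cases hk : k = v <;> simp [hk, hx]
    _ = x := one_mulVec x

def border (P : Matrix V V ℝ) (v : V) (b : V → ℝ) (δ : ℝ) : Matrix V V ℝ :=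
  ((1 : Matrix V V ℝ).updateCol v b)ᵀ * P * (1 : Matrix V V ℝ).updateCol v b +
    diagonal (Pi.single v δ)

variable {P : Matrix V V ℝ} {v : V} {b : V → ℝ} {δ : ℝ}

lemma border_apply_of_ne {x y : V} (hx : x ≠ v) (hy : y ≠ v) : border P v b δ x y = P x y := by
  simp [border, transpose_mul_mul_apply, transpose_updateCol_one_apply, hx, hy, diagonal_apply]

lemma border_apply_self_left {y : V} (hy : y ≠ v) :
    border P v b δ v y = b ⬝ᵥ fun z => P z y := by
  simp [border, transpose_mul_mul_apply, transpose_updateCol_one_apply, hy, Ne.symm hy]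
  rfl

lemma border_apply_self : border P v b δ v v = b ⬝ᵥ (P *ᵥ b) + δ := by
  simp [border, transpose_mul_mul_apply, transpose_updateCol_one_apply]

lemma PosDef.border (hP : P.PosDef) (hδ : 0 < δ) : (border P v b δ).PosDef := by
  set N := (1 : Matrix V V ℝ).updateCol v b
  have hNP : (Nᵀ * P * N).IsHermitian := by
    simpa [conjTranspose_eq_transpose_of_trivial] using isHermitian_conjTranspose_mul_mul N hP.1
  refine PosDef.of_dotProduct_mulVec_pos (hNP.add (isHermitian_diagonal _)) fun x hx => ?_
  have hquad : star x ⬝ᵥ (Matrix.border P v b δ *ᵥ x) =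
      (N *ᵥ x) ⬝ᵥ (P *ᵥ (N *ᵥ x)) + δ * x v ^ 2 := by
    rw [Matrix.border, add_mulVec, dotProduct_add, star_trivial, Matrix.mul_assoc,
      ← mulVec_mulVec, dotProduct_mulVec, vecMul_transpose, mulVec_mulVec]
    simp [dotProduct, mulVec_diagonal, Pi.single_apply]
    ring
  rw [hquad]
  by_cases hxv : x v = 0
  · rw [updateCol_one_mulVec_of_apply_eq_zero v b hxv, hxv]
    simpa using hP.dotProduct_mulVec_pos hx
  · have := hP.posSemidef.dotProduct_mulVec_nonneg (N *ᵥ x)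
    simp only [star_trivial] at this
    positivity

lemma exists_posDef_update_row {A P' : Matrix V V ℝ} (hA : A.IsHermitian) (hP' : P'.PosDef)
    {v : V} {C : Finset V} (hvC : v ∉ C) (hAvC : PosDefOn A (insert v ↑C))
    (hP'A : ∀ x ∈ C, ∀ y ∈ C, P' x y = A x y) :
    ∃ P : Matrix V V ℝ, P.PosDef ∧ (∀ x y, x ≠ v → y ≠ v → P x y = P' x y) ∧
      ∀ y ∈ insert v C, P v y = A v y := by
  obtain ⟨b, hbC, hAb⟩ :=
    (hAvC.mono (Set.subset_insert v ↑C)).exists_mulVec_eq hA fun y => A y v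
  have hδ := hAvC.dotProduct_mulVec_lt hA hvC hbC hAb
  have hP'b : ∀ y ∈ C, (P' *ᵥ b) y = (A *ᵥ b) y := fun y hy => by
    simp only [mulVec]
    rw [dotProduct_comm, dotProduct_comm (A y)]
    exact dotProduct_congr_of_support_subset hbC fun z hz => hP'A y hy z hz
  refine ⟨border P' v b (A v v - b ⬝ᵥ (A *ᵥ b)), hP'.border (by linarith),
    fun x y hx hy => border_apply_of_ne hx hy, fun y hy => ?_⟩
  rcases Finset.mem_insert.mp hy with rfl | hy
  · rw [border_apply_self, dotProduct_congr_of_support_subset hbC hP'b]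
    ring
  · calc border P' v b _ v y = b ⬝ᵥ fun z => P' z y := border_apply_self_left fun h => hvC (h ▸ hy)
      _ = b ⬝ᵥ A y := dotProduct_congr_of_support_subset hbC fun z hz => by
          rw [hP'A z hz y hy, hA.apply_comm]
      _ = A v y := by rw [dotProduct_comm, ← mulVec, hAb y hy, hA.apply_comm]

end Border

section GeneralPosition

variable {V : Type*} [Fintype V] [DecidableEq V]

lemma card_le_rank_of_det_submatrix_ne_zero {A : Matrix V V ℝ} {α : Finset V}
    (h : (A.submatrix ((↑) : α → V) ((↑) : α → V)).det ≠ 0) : α.card ≤ A.rank := by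
  calc α.card = (A.submatrix ((↑) : α → V) ((↑) : α → V)).rank := by
        rw [rank_of_isUnit _ ((isUnit_iff_isUnit_det _).mpr h.isUnit), Fintype.card_coe]
    _ ≤ A.rank := rank_submatrix_le A _ _

lemma InGenPos.posDefOn {A : Matrix V V ℝ} {d : ℕ} (h : InGenPos A d) {K : Finset V}
    (hK : K.card ≤ d) : PosDefOn A K := by
  have hd : d ≤ (Finset.univ : Finset V).card := by
    simpa [← h.2.1] using A.rank_le_card_width
  obtain ⟨α, hKα, -, hα⟩ := Finset.exists_subsuperset_card_eq (Finset.subset_univ K) hK hd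
  have hαpd := (h.1.submatrix ((↑) : α → V)).posDef_iff_det_ne_zero.mpr (h.2.2 α hα)
  exact ((posDefOn_iff_posDef_submatrix h.1.1 α).mpr hαpd).mono (by exact_mod_cast hKα)

/-- The Gram matrix of the rows `(1, tᵥ, …, tᵥ^(r-1))` for distinct nodes `tᵥ`: its `r × r`
principal minors are squares of Vandermonde determinants. -/
lemma exists_inGenPos {r : ℕ} (hr : r ≤ Fintype.card V) :
    ∃ A : Matrix V V ℝ, InGenPos A r := by
  set t : V → ℝ := fun v => (Fintype.equivFin V v : ℕ)
  have ht : Function.Injective t := fun a b hab =>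
    (Fintype.equivFin V).injective (Fin.val_injective (Nat.cast_injective hab))
  set M : Matrix V (Fin r) ℝ := of fun v k => t v ^ (k : ℕ)
  have hminor : ∀ α : Finset V, α.card = r →
      ((M * Mᵀ).submatrix ((↑) : α → V) (↑)).det ≠ 0 := by
    intro α hα
    let e : α ≃ Fin r := Fintype.equivFinOfCardEq (by simpa using hα)
    set N := vandermonde fun i => t (e.symm i)
    have hsub : (M * Mᵀ).submatrix ((↑) : α → V) (↑) = (N * Nᵀ).submatrix e e := by
      ext i j
      simp [N, M, mul_apply, vandermonde]
    have hN : N.det ≠ 0 :=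
      det_vandermonde_ne_zero_iff.mpr fun a b hab => e.symm.injective (Subtype.ext (ht hab))
    rw [hsub, det_submatrix_equiv_self, det_mul, det_transpose]
    exact mul_ne_zero hN hN
  obtain ⟨α, -, hα⟩ := Finset.exists_subset_card_eq (s := Finset.univ) (by simpa using hr)
  refine ⟨M * Mᵀ, ?_, le_antisymm ?_ ?_, hminor⟩
  · simpa [conjTranspose_eq_transpose_of_trivial] using posSemidef_self_mul_conjTranspose M
  · exact (rank_mul_le_left _ _).trans (M.rank_le_card_width.trans (by simp))
  · exact hα.ge.trans (card_le_rank_of_det_submatrix_ne_zero (hminor α hα))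

end GeneralPosition

end Matrix

section Invariants

variable {X : Type*}

lemma minDeg_le_ncard_neighborSet (Γ : SimpleGraph X) (v : X) :
    minDeg Γ ≤ (Γ.neighborSet v).ncard :=
  Nat.sInf_le ⟨v, rfl⟩

lemma vertexConn_le_minDeg (Γ : SimpleGraph X) : vertexConn Γ ≤ minDeg Γ := by
  cases isEmpty_or_nonempty X
  · refine (Nat.sInf_le (m := 0) ?_).trans (Nat.zero_le _)
    exact ⟨∅, by simp, .inr (by simp)⟩
  obtain ⟨v, hv⟩ := Nat.sInf_mem (s := {k | ∃ v, (Γ.neighborSet v).ncard = k})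
    ⟨_, Classical.arbitrary X, rfl⟩
  refine Nat.sInf_le ⟨Γ.neighborSet v, hv, ?_⟩
  rw [or_iff_not_imp_right, not_le]
  intro hcard hconn
  have hvS : v ∈ (Γ.neighborSet v)ᶜ := Γ.irrefl
  obtain ⟨u, hu, huv⟩ := Set.exists_ne_of_one_lt_ncard hcard v
  -- the first step of a walk from `v` to `u` would be a neighbour of `v` outside its neighbourhood
  obtain ⟨w⟩ := hconn.preconnected ⟨v, hvS⟩ ⟨u, hu⟩
  cases w with
  | nil => exact huv rfl
  | cons hadj _ => exact (Set.mem_compl_iff _ _).mp (Subtype.prop _) hadj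

variable [Finite X]

lemma ncard_compl_singleton (v : X) : ({v}ᶜ : Set X).ncard = Nat.card X - 1 := by
  rw [Set.ncard_compl, Set.ncard_singleton]

lemma minDeg_top [Nonempty X] : minDeg (⊤ : SimpleGraph X) = Nat.card X - 1 := by
  refine IsLeast.csInf_eq ⟨⟨Classical.arbitrary X, ?_⟩, ?_⟩
  · rw [SimpleGraph.neighborSet_top, ncard_compl_singleton]
  · rintro _ ⟨v, rfl⟩
    rw [SimpleGraph.neighborSet_top, ncard_compl_singleton]

lemma vertexConn_top [Nonempty X] : vertexConn (⊤ : SimpleGraph X) = Nat.card X - 1 := by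
  refine IsLeast.csInf_eq
    ⟨⟨{Classical.arbitrary X}ᶜ, ncard_compl_singleton _, .inr (by simp)⟩, ?_⟩
  rintro _ ⟨S, rfl, hS⟩
  have hSc : Sᶜ.ncard ≤ 1 := by
    refine hS.elim (fun hconn => ?_) id
    obtain hS | ⟨x, hx⟩ := Sᶜ.eq_empty_or_nonempty
    · simp [hS]
    · have : Nonempty ↥Sᶜ := ⟨⟨x, hx⟩⟩
      exact absurd (SimpleGraph.induce_top Sᶜ ▸ SimpleGraph.connected_top) hconn
  have := Set.ncard_add_ncard_compl S
  omega

end Invariants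

namespace SimpleGraph

section Simplicial

variable {V : Type*} (G : SimpleGraph V)

def IsSimplicialIn (s : Finset V) (v : V) : Prop :=
  v ∈ s ∧ G.IsClique {x | x ∈ s ∧ G.Adj v x}

variable {G}

lemma IsSimplicialIn.isClique_insert {s : Finset V} {v : V} (h : G.IsSimplicialIn s v) :
    G.IsClique (insert v {x | x ∈ s ∧ G.Adj v x}) :=
  h.2.insert fun _ hx _ => hx.2

lemma IsSimplicialIn.of_subset {s t : Finset V} {v : V} (hv : G.IsSimplicialIn t v) (hts : t ⊆ s)
    (hN : ∀ x ∈ s, G.Adj v x → x ∈ t) : G.IsSimplicialIn s v :=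
  ⟨hts hv.1, hv.2.subset fun x hx => show x ∈ t ∧ G.Adj v x from ⟨hN x hx.1 hx.2, hx.2⟩⟩

lemma IsClique.isSimplicialIn {s : Finset V} (hs : G.IsClique (s : Set V)) {v : V} (hv : v ∈ s) :
    G.IsSimplicialIn s v :=
  ⟨hv, hs.subset fun _ hx => hx.1⟩

end Simplicial

section Chains

variable {V : Type*} (G : SimpleGraph V)

/-- Walks are indexed by `ℕ` here, rather than being `SimpleGraph.Walk`s, so that two of them
can be glued into a cycle. -/
structure IsChain (u : Set V) (c : ℕ → V) (k : ℕ) (a b : V) : Prop where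
  zero_eq : c 0 = a
  last_eq : c k = b
  adj : ∀ i < k, G.Adj (c i) (c (i + 1))
  mem : ∀ i ≤ k, c i ∈ u

def ReachIn (u : Set V) (a b : V) : Prop :=
  ∃ c k, G.IsChain u c k a b

variable {G} {u : Set V} {c : ℕ → V} {k : ℕ} {a b d : V}

namespace IsChain

lemma mono (h : G.IsChain u c k a b) {u' : Set V} (hu : u ⊆ u') : G.IsChain u' c k a b :=
  ⟨h.zero_eq, h.last_eq, h.adj, fun i hi => hu (h.mem i hi)⟩

lemma take (h : G.IsChain u c k a b) {i : ℕ} (hi : i ≤ k) : G.IsChain u c i a (c i) :=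
  ⟨h.zero_eq, rfl, fun j hj => h.adj j (by omega), fun j hj => h.mem j (by omega)⟩

lemma drop (h : G.IsChain u c k a b) {i : ℕ} (hi : i ≤ k) :
    G.IsChain u (fun t => c (i + t)) (k - i) (c i) b :=
  ⟨rfl, by simp only [Nat.add_sub_cancel' hi, h.last_eq], fun j hj => h.adj (i + j) (by omega),
    fun j hj => h.mem (i + j) (by omega)⟩

lemma reverse (h : G.IsChain u c k a b) : G.IsChain u (fun t => c (k - t)) k b a :=
  ⟨by simpa using h.last_eq, by simpa using h.zero_eq, fun i hi => by
    simpa [show k - i = k - (i + 1) + 1 by omega] using (h.adj (k - (i + 1)) (by omega)).symm,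
    fun i _ => h.mem _ (by omega)⟩

lemma append {c' : ℕ → V} {k' : ℕ} (h : G.IsChain u c k a b) (h' : G.IsChain u c' k' b d) :
    G.IsChain u (fun t => if t ≤ k then c t else c' (t - k)) (k + k') a d := by
  obtain ⟨h0, hk, hadj, hmem⟩ := h
  obtain ⟨h0', hk', hadj', hmem'⟩ := h'
  refine ⟨by simpa using h0, ?_, fun i hi => ?_, fun i hi => ?_⟩
  · rcases Nat.eq_zero_or_pos k' with rfl | hk'0
    · simp [hk, ← hk', h0']
    · simpa [show ¬k + k' ≤ k by omega] using hk'
  · rcases lt_or_ge i k with hik | hik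
    · simpa [hik.le, show i + 1 ≤ k by omega] using hadj i hik
    · have := hadj' (i - k) (by omega)
      rcases hik.eq_or_lt with rfl | hik
      · simpa [hk, ← h0'] using this
      · simpa [show ¬i ≤ k by omega, show ¬i < k by omega, show i + 1 - k = i - k + 1 by omega]
          using this
  · by_cases hik : i ≤ k
    · simpa [hik] using hmem i hik
    · simpa [hik] using hmem' (i - k) (by omega)

end IsChain

lemma isChain_zero (ha : a ∈ u) : G.IsChain u (fun _ => a) 0 a a :=
  ⟨rfl, rfl, fun _ hi => absurd hi (Nat.not_lt_zero _), fun _ _ => ha⟩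

lemma Adj.isChain (h : G.Adj a b) (ha : a ∈ u) (hb : b ∈ u) :
    G.IsChain u (fun t => if t = 0 then a else b) 1 a b :=
  ⟨rfl, rfl, fun i hi => by simpa [show i = 0 by omega] using h,
    fun i _ => by by_cases hi : i = 0 <;> simp [hi, ha, hb]⟩

lemma IsChain.exists_adj_mem_notMem (h : G.IsChain u c k a b) {R : Set V} (ha : a ∈ R)
    (hb : b ∉ R) : ∃ x ∈ R, ∃ y ∈ u, y ∉ R ∧ G.Adj x y := by
  obtain ⟨h0, hk, hadj, hmem⟩ := h
  subst h0 hk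
  induction k with
  | zero => exact absurd ha hb
  | succ k ih =>
    by_cases hck : c k ∈ R
    · exact ⟨c k, hck, c (k + 1), hmem _ le_rfl, hb, hadj k (by omega)⟩
    · exact ih (fun i hi => hadj i (by omega)) (fun i hi => hmem i (by omega)) hck

namespace ReachIn

lemma refl (ha : a ∈ u) : G.ReachIn u a a := ⟨_, _, isChain_zero ha⟩

lemma symm (h : G.ReachIn u a b) : G.ReachIn u b a :=
  let ⟨_, _, hc⟩ := h; ⟨_, _, hc.reverse⟩

lemma trans (h : G.ReachIn u a b) (h' : G.ReachIn u b d) : G.ReachIn u a d :=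
  let ⟨_, _, hc⟩ := h; let ⟨_, _, hc'⟩ := h'; ⟨_, _, hc.append hc'⟩

lemma mono (h : G.ReachIn u a b) {u' : Set V} (hu : u ⊆ u') : G.ReachIn u' a b :=
  let ⟨_, _, hc⟩ := h; ⟨_, _, hc.mono hu⟩

lemma mem_right (h : G.ReachIn u a b) : b ∈ u :=
  let ⟨_, k, hc⟩ := h; hc.last_eq ▸ hc.mem k le_rfl

lemma mem_left (h : G.ReachIn u a b) : a ∈ u :=
  h.symm.mem_right

lemma trans_adj (h : G.ReachIn u a b) (hbd : G.Adj b d) (hd : d ∈ u) : G.ReachIn u a d :=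
  h.trans ⟨_, _, hbd.isChain h.mem_right hd⟩

lemma reachIn_component (h : G.ReachIn u a b) : G.ReachIn {z | G.ReachIn u a z} a b := by
  obtain ⟨c, k, hc⟩ := h
  refine ⟨c, k, hc.zero_eq, hc.last_eq, hc.adj, fun i hi => ?_⟩
  exact ⟨c, i, hc.take hi⟩

end ReachIn

variable (G) in
structure IsInducedPath (u : Set V) (c : ℕ → V) (k : ℕ) (a b : V) : Prop
    extends G.IsChain u c k a b where
  inj : ∀ i ≤ k, ∀ j ≤ k, c i = c j → i = j
  succ_of_adj : ∀ i ≤ k, ∀ j ≤ k, G.Adj (c i) (c j) → j = i + 1 ∨ i = j + 1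

lemma IsInducedPath.adj_iff (h : G.IsInducedPath u c k a b) {i j : ℕ}
    (hi : i ≤ k) (hj : j ≤ k) : G.Adj (c i) (c j) ↔ j = i + 1 ∨ i = j + 1 := by
  refine ⟨h.succ_of_adj i hi j hj, ?_⟩
  rintro (rfl | rfl)
  exacts [h.adj i (by omega), (h.adj j (by omega)).symm]

/-- A shortest chain is an induced path: a repeated vertex or a chord would shortcut it. -/
lemma ReachIn.exists_isInducedPath (h : G.ReachIn u a b) : ∃ c k, G.IsInducedPath u c k a b := by
  classical
  have hex : ∃ k c, G.IsChain u c k a b := let ⟨c, k, hc⟩ := h; ⟨k, c, hc⟩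
  obtain ⟨c, hc⟩ := Nat.find_spec hex
  set k := Nat.find hex
  have hrep : ∀ i j, i < j → j ≤ k → c i ≠ c j := fun i j hij hj he =>
    Nat.find_min hex (show i + (k - j) < k by omega)
      ⟨_, (he ▸ hc.take (by omega)).append (hc.drop hj)⟩
  have hchord : ∀ i j, i + 1 < j → j ≤ k → ¬G.Adj (c i) (c j) := fun i j hij hj hadj =>
    Nat.find_min hex (show i + 1 + (k - j) < k by omega)
      ⟨_, ((hc.take (by omega)).append
        (hadj.isChain (hc.mem i (by omega)) (hc.mem j hj))).append (hc.drop hj)⟩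
  refine ⟨c, k, hc, fun i hi j hj he => ?_, fun i hi j hj hadj => ?_⟩
  · rcases lt_trichotomy i j with hij | rfl | hij
    exacts [absurd he (hrep i j hij hj), rfl, absurd he.symm (hrep j i hij hi)]
  · by_contra hne
    rcases lt_trichotomy i j with hij | rfl | hij
    exacts [hchord i j (by omega) hj hadj, G.irrefl hadj, hchord j i (by omega) hi hadj.symm]

lemma exists_isInducedPath_through_component {u : Set V} {r x y : V} (hxy : x ≠ y)
    (hnadj : ¬G.Adj x y) (hx : ∃ z, G.ReachIn u r z ∧ G.Adj z x)
    (hy : ∃ z, G.ReachIn u r z ∧ G.Adj z y) :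
    ∃ p m, G.IsInducedPath ({z | G.ReachIn u r z} ∪ {x, y}) p m x y ∧ 2 ≤ m ∧
      ∀ i, 0 < i → i < m → G.ReachIn u r (p i) := by
  obtain ⟨zx, hrzx, hzx⟩ := hx
  obtain ⟨zy, hrzy, hzy⟩ := hy
  have hxU : x ∈ {z | G.ReachIn u r z} ∪ {x, y} := by simp
  have hyU : y ∈ {z | G.ReachIn u r z} ∪ {x, y} := by simp
  have hcomp := (hrzx.reachIn_component.symm.trans hrzy.reachIn_component).mono
    (Set.subset_union_left (t := {x, y}))
  obtain ⟨p, m, hp⟩ := (((ReachIn.refl hxU).trans_adj hzx.symm hcomp.mem_left).trans hcomp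
    |>.trans_adj hzy hyU).exists_isInducedPath
  refine ⟨p, m, hp, ?_, fun i hi0 him => ?_⟩
  · by_contra hm
    interval_cases m
    · exact hxy (hp.zero_eq.symm.trans hp.last_eq)
    · exact hnadj (hp.zero_eq ▸ hp.last_eq ▸ hp.adj 0 one_pos)
  · obtain hi | hi | hi := hp.mem i him.le
    · exact hi
    · exact absurd (hp.inj i him.le 0 (Nat.zero_le _) (hi.trans hp.zero_eq.symm)) hi0.ne'
    · exact absurd (hp.inj i him.le m le_rfl (hi.trans hp.last_eq.symm)) him.ne

end Chains

section Chordal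

variable {V : Type*} {G : SimpleGraph V}

variable (G) in
def IsChordal : Prop :=
  ∀ n : ℕ, 4 ≤ n → ∀ s : Set V, IsEmpty (G.induce s ≃g cycleGraph n)

lemma cycleGraph_adj_iff_val {n : ℕ} {a b : Fin (n + 2)} :
    (cycleGraph (n + 2)).Adj a b ↔ (b : ℕ) = a + 1 ∨ (a : ℕ) = b + 1 ∨
      ((a : ℕ) = 0 ∧ (b : ℕ) + 1 = n + 2) ∨ ((b : ℕ) = 0 ∧ (a : ℕ) + 1 = n + 2) := by
  rw [cycleGraph_adj, sub_eq_iff_eq_add, sub_eq_iff_eq_add, add_comm 1 b, add_comm 1 a,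
    Fin.ext_iff, Fin.ext_iff, Fin.val_add_one, Fin.val_add_one]
  have := a.isLt
  have := b.isLt
  split_ifs with ha hb hb <;> simp only [Fin.ext_iff, Fin.val_last] at ha hb <;> omega

lemma IsChordal.false_of_cycle (hG : G.IsChordal) {n : ℕ} (hn : 4 ≤ n) {f : ℕ → V}
    (hinj : ∀ i < n, ∀ j < n, f i = f j → i = j)
    (hadj : ∀ i < n, ∀ j < n, G.Adj (f i) (f j) ↔
      j = i + 1 ∨ i = j + 1 ∨ (i = 0 ∧ j + 1 = n) ∨ (j = 0 ∧ i + 1 = n)) : False := by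
  obtain ⟨n, rfl⟩ : ∃ m, n = m + 2 := ⟨n - 2, by omega⟩
  set g : Fin (n + 2) → V := fun i => f i
  have hg : Function.Injective g := fun i j h => Fin.ext (hinj i i.2 j j.2 h)
  let e : cycleGraph (n + 2) ≃g G.induce (Set.range g) :=
    ⟨Equiv.ofInjective g hg, fun {i j} => by
      simp only [Equiv.ofInjective_apply, comap_adj, Function.Embedding.coe_subtype]
      rw [hadj i i.2 j j.2, cycleGraph_adj_iff_val]⟩
  exact (hG _ hn _).false e.symm

/-- The two paths close up an induced cycle of length `m + l ≥ 4`. -/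
lemma IsChordal.false_of_isInducedPath_pair (hG : G.IsChordal) {u₁ u₂ : Set V} {p q : ℕ → V}
    {m l : ℕ} {x y : V} (hp : G.IsInducedPath u₁ p m x y) (hq : G.IsInducedPath u₂ q l x y)
    (hm : 2 ≤ m) (hl : 2 ≤ l)
    (hpq : ∀ i, 0 < i → i < m → ∀ j, 0 < j → j < l →
      p i ≠ q j ∧ ¬G.Adj (p i) (q j)) : False := by
  have hx : p 0 = q 0 := hp.zero_eq.trans hq.zero_eq.symm
  have hy : p m = q l := hp.last_eq.trans hq.last_eq.symm
  have hcross : ∀ i ≤ m, ∀ j, 0 < j → j < l →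
      p i ≠ q j ∧ (G.Adj (p i) (q j) ↔ (i = 0 ∧ j = 1) ∨ (i = m ∧ j + 1 = l)) := by
    intro i hi j hj0 hjl
    by_cases hi0 : i = 0
    · subst hi0
      refine ⟨fun h => absurd (hq.inj 0 (by omega) j (by omega) (hx ▸ h)) (by omega), ?_⟩
      rw [hx, hq.adj_iff (by omega) (by omega)]
      omega
    by_cases him : i = m
    · subst him
      refine ⟨fun h => absurd (hq.inj l le_rfl j (by omega) (hy ▸ h)) (by omega), ?_⟩
      rw [hy, hq.adj_iff le_rfl (by omega)]
      omega
    obtain ⟨hne, hnadj⟩ := hpq i (by omega) (by omega) j hj0 hjl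
    exact ⟨hne, iff_of_false hnadj (by omega)⟩
  set F : ℕ → V := fun t => if t ≤ m then p t else q (m + l - t)
  have hF : ∀ i j, i ≤ j → j < m + l → (F i = F j → i = j) ∧ (G.Adj (F i) (F j) ↔
      j = i + 1 ∨ i = j + 1 ∨ (i = 0 ∧ j + 1 = m + l) ∨ (j = 0 ∧ i + 1 = m + l)) := by
    intro i j hij hj
    by_cases hjm : j ≤ m
    · simp only [F, hjm, hij.trans hjm, if_true]
      exact ⟨hp.inj i (by omega) j hjm, by rw [hp.adj_iff (by omega) hjm]; omega⟩
    by_cases him : i ≤ m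
    · simp only [F, hjm, him, if_true, if_false]
      obtain ⟨hne, hadj⟩ := hcross i him (m + l - j) (by omega) (by omega)
      exact ⟨fun h => absurd h hne, by rw [hadj]; omega⟩
    · simp only [F, hjm, him, if_false]
      exact ⟨fun h => by have := hq.inj _ (by omega) _ (by omega) h; omega,
        by rw [hq.adj_iff (by omega) (by omega)]; omega⟩
  refine hG.false_of_cycle (show 4 ≤ m + l by omega) (f := F) (fun i hi j hj => ?_)
    fun i hi j hj => ?_
  · rcases le_total i j with hij | hij
    exacts [(hF i j hij hj).1, fun h => ((hF j i hij hi).1 h.symm).symm]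
  · rcases le_total i j with hij | hij
    · exact (hF i j hij hj).2
    · rw [G.adj_comm, (hF j i hij hi).2]
      omega

end Chordal

section Separators

variable {V : Type*} {G : SimpleGraph V} [DecidableEq V] {s T : Finset V} {a b : V}

variable (G) in
structure Separates (s T : Finset V) (a b : V) : Prop where
  subset : T ⊆ s
  left_notMem : a ∉ T
  right_notMem : b ∉ T
  not_reachIn : ¬G.ReachIn ↑(s \ T) a b

lemma Separates.symm (h : G.Separates s T a b) : G.Separates s T b a :=
  ⟨h.subset, h.right_notMem, h.left_notMem, fun h' => h.not_reachIn h'.symm⟩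

lemma separates_sdiff_pair (ha : a ∈ s) (hb : b ∈ s) (hab : a ≠ b) (hnadj : ¬G.Adj a b) :
    G.Separates s (s \ {a, b}) a b := by
  refine ⟨Finset.sdiff_subset, by simp, by simp, ?_⟩
  rintro ⟨c, k, hc⟩
  obtain ⟨x, rfl, y, hy, hya, hxy⟩ := hc.exists_adj_mem_notMem (R := {a}) rfl (Ne.symm hab)
  have hyb : y = b := by simp_all
  exact hnadj (hyb ▸ hxy)

lemma Separates.exists_minimal (h : G.Separates s T a b) :
    ∃ T', G.Separates s T' a b ∧ ∀ t ∈ T', ¬G.Separates s (T'.erase t) a b := by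
  induction T using Finset.strongInduction with | H T ih =>
  by_cases hmin : ∀ t ∈ T, ¬G.Separates s (T.erase t) a b
  · exact ⟨T, h, hmin⟩
  simp only [not_forall, not_not] at hmin
  obtain ⟨t, ht, hsep⟩ := hmin
  exact ih _ (Finset.erase_ssubset ht) hsep

lemma Separates.exists_adj_of_erase (h : G.Separates s T a b) {t : V}
    (hmin : ¬G.Separates s (T.erase t) a b) (ha : a ∈ s) :
    ∃ z, G.ReachIn ↑(s \ T) a z ∧ G.Adj z t := by
  have hreach : G.ReachIn ↑(s \ T.erase t) a b := by
    by_contra hr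
    exact hmin ⟨(Finset.erase_subset _ _).trans h.subset,
      fun h' => h.left_notMem (Finset.mem_of_mem_erase h'),
      fun h' => h.right_notMem (Finset.mem_of_mem_erase h'), hr⟩
  obtain ⟨c, k, hc⟩ := hreach
  obtain ⟨z, hz, y, hy, hyR, hzy⟩ := hc.exists_adj_mem_notMem
    (R := {z | G.ReachIn ↑(s \ T) a z}) (ReachIn.refl (by simp [ha, h.left_notMem])) h.not_reachIn
  refine ⟨z, hz, ?_⟩
  by_cases hyt : y = t
  · exact hyt ▸ hzy
  · exact absurd (hz.trans_adj hzy (by simp_all)) hyR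

/-- Dirac: a minimal separator of a chordal graph is a clique, for otherwise two non-adjacent
vertices of it would close up an induced cycle through the components of `a` and of `b`. -/
lemma IsChordal.isClique_of_separates (hG : G.IsChordal) (h : G.Separates s T a b)
    (hmin : ∀ t ∈ T, ¬G.Separates s (T.erase t) a b) (ha : a ∈ s) (hb : b ∈ s) :
    G.IsClique (T : Set V) := by
  intro x hx y hy hxy
  by_contra hnadj
  have hnbr : ∀ t ∈ T, (∃ z, G.ReachIn ↑(s \ T) a z ∧ G.Adj z t) ∧
      ∃ z, G.ReachIn ↑(s \ T) b z ∧ G.Adj z t := fun t ht =>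
    ⟨h.exists_adj_of_erase (hmin t ht) ha,
      h.symm.exists_adj_of_erase (fun h' => hmin t ht h'.symm) hb⟩
  obtain ⟨p, m, hp, hm, hpa⟩ := exists_isInducedPath_through_component hxy hnadj
    (hnbr x hx).1 (hnbr y hy).1
  obtain ⟨q, l, hq, hl, hqb⟩ := exists_isInducedPath_through_component hxy hnadj
    (hnbr x hx).2 (hnbr y hy).2
  refine hG.false_of_isInducedPath_pair hp hq hm hl
    fun i hi0 him j hj0 hjl => ⟨fun he => ?_, ?_⟩
  · exact h.not_reachIn ((hpa i hi0 him).trans (he ▸ hqb j hj0 hjl).symm)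
  · exact fun hadj => h.not_reachIn
      (((hpa i hi0 him).trans_adj hadj (hqb j hj0 hjl).mem_right).trans (hqb j hj0 hjl).symm)

/-- A simplicial vertex of the smaller graph spanned by the component of `a` and the clique
separator `T` is simplicial in `s`, unless it lies in `T`. -/
lemma Separates.exists_isSimplicialIn (h : G.Separates s T a b) (hT : G.IsClique (T : Set V))
    (ha : a ∈ s) (hb : b ∈ s)
    (ih : ∀ t ⊂ s, G.IsClique (t : Set V) ∨
      ∃ v w, G.IsSimplicialIn t v ∧ G.IsSimplicialIn t w ∧ v ≠ w ∧ ¬G.Adj v w) :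
    ∃ v, G.IsSimplicialIn s v ∧ G.ReachIn ↑(s \ T) a v := by
  classical
  set t := s.filter (G.ReachIn ↑(s \ T) a) ∪ T
  have hts : t ⊂ s := Finset.ssubset_iff_of_subset
    (Finset.union_subset (Finset.filter_subset _ _) h.subset) |>.mpr ⟨b, hb, by
      simp only [Finset.mem_union, Finset.mem_filter, not_or]
      exact ⟨fun hb' => h.not_reachIn hb'.2, h.right_notMem⟩⟩
  have hlift : ∀ v ∈ t, v ∉ T → G.IsSimplicialIn t v →
      G.IsSimplicialIn s v ∧ G.ReachIn ↑(s \ T) a v := by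
    intro v hvt hvT hv
    have hav : G.ReachIn ↑(s \ T) a v :=
      (Finset.mem_filter.mp ((Finset.mem_union.mp hvt).resolve_right hvT)).2
    refine ⟨hv.of_subset hts.subset fun x hx hvx => ?_, hav⟩
    by_cases hxT : x ∈ T
    · exact Finset.mem_union_right _ hxT
    · exact Finset.mem_union_left _ (Finset.mem_filter.mpr
        ⟨hx, hav.trans_adj hvx (by simp [hx, hxT])⟩)
  rcases ih t hts with hclq | ⟨v, w, hv, hw, hvw, hnadj⟩
  · have hat : a ∈ t := Finset.mem_union_left _
      (Finset.mem_filter.mpr ⟨ha, ReachIn.refl (by simp [ha, h.left_notMem])⟩)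
    exact ⟨a, hlift a hat h.left_notMem (hclq.isSimplicialIn hat)⟩
  · by_cases hvT : v ∈ T
    · exact ⟨w, hlift w hw.1 (fun hwT => hnadj (hT hvT hwT hvw)) hw⟩
    · exact ⟨v, hlift v hv.1 hvT hv⟩

theorem IsChordal.isClique_or_exists_isSimplicialIn (hG : G.IsChordal) (s : Finset V) :
    G.IsClique (s : Set V) ∨
      ∃ v w, G.IsSimplicialIn s v ∧ G.IsSimplicialIn s w ∧ v ≠ w ∧ ¬G.Adj v w := by
  induction s using Finset.strongInduction with | H s ih =>
  by_cases hs : G.IsClique (s : Set V)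
  · exact .inl hs
  obtain ⟨a, ha, b, hb, hab, hnadj⟩ : ∃ a ∈ s, ∃ b ∈ s, a ≠ b ∧ ¬G.Adj a b := by
    simpa [IsClique, Set.Pairwise] using hs
  obtain ⟨T, hT, hmin⟩ := (separates_sdiff_pair ha hb hab hnadj).exists_minimal
  have hTcl := hG.isClique_of_separates hT hmin ha hb
  obtain ⟨v, hv, hav⟩ := hT.exists_isSimplicialIn hTcl ha hb ih
  obtain ⟨w, hw, hbw⟩ := hT.symm.exists_isSimplicialIn hTcl hb ha ih
  exact .inr ⟨v, w, hv, hw, fun hvw => hT.not_reachIn (hav.trans (hvw ▸ hbw.symm)),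
    fun hvw => hT.not_reachIn ((hav.trans_adj hvw hbw.mem_right).trans hbw.symm)⟩

lemma IsChordal.exists_isSimplicialIn (hG : G.IsChordal) {s : Finset V} (hs : s.Nonempty) :
    ∃ v, G.IsSimplicialIn s v :=
  (hG.isClique_or_exists_isSimplicialIn s).elim (fun h => ⟨_, h.isSimplicialIn hs.choose_spec⟩)
    fun ⟨v, _, hv, _⟩ => ⟨v, hv⟩

end Separators

section Cliques

variable {V : Type*} {G : SimpleGraph V}

lemma IsClique.ncard_le_cliqueNum [Finite V] {t : Set V} (ht : G.IsClique t) :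
    t.ncard ≤ G.cliqueNum := by
  rw [Set.ncard_eq_toFinset_card t]
  exact IsClique.card_le_cliqueNum (tc := by simpa using ht)

lemma cliqueNum_pos [Finite V] [Nonempty V] : 0 < G.cliqueNum := by
  have := (isClique_singleton (G := G) (Classical.arbitrary V)).ncard_le_cliqueNum
  rwa [Set.ncard_singleton] at this

lemma IsSimplicialIn.ncard_neighborSet_lt_cliqueNum [Finite V] {s : Finset V} {v : V}
    (hv : G.IsSimplicialIn s v) {H : G.Subgraph} (hHs : H.verts ⊆ s) (hvH : v ∈ H.verts) :
    (H.coe.neighborSet ⟨v, hvH⟩).ncard < G.cliqueNum := by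
  have hsub : Subtype.val '' H.coe.neighborSet ⟨v, hvH⟩ ⊆ {x | x ∈ s ∧ G.Adj v x} := by
    rintro _ ⟨x, hx, rfl⟩
    exact ⟨hHs x.2, H.adj_sub hx⟩
  have hvN : v ∉ {x | x ∈ s ∧ G.Adj v x} := fun h => G.irrefl h.2
  calc (H.coe.neighborSet ⟨v, hvH⟩).ncard
      = (Subtype.val '' H.coe.neighborSet ⟨v, hvH⟩).ncard :=
        (Set.ncard_image_of_injective _ Subtype.val_injective).symm
    _ ≤ {x | x ∈ s ∧ G.Adj v x}.ncard := Set.ncard_le_ncard hsub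
    _ < (insert v {x | x ∈ s ∧ G.Adj v x}).ncard := by
        rw [Set.ncard_insert_of_notMem hvN]
        omega
    _ ≤ G.cliqueNum := hv.isClique_insert.ncard_le_cliqueNum

lemma minDeg_coe_lt_cliqueNum [Finite V] [Nonempty V]
    (hG : ∀ s : Finset V, s.Nonempty → ∃ v, G.IsSimplicialIn s v) (H : G.Subgraph) :
    minDeg H.coe < G.cliqueNum := by
  obtain hH | hH := H.verts.eq_empty_or_nonempty
  · have : IsEmpty H.verts := Set.isEmpty_coe_sort.mpr hH
    simpa [minDeg] using cliqueNum_pos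
  obtain ⟨v, hv⟩ := hG H.verts.toFinite.toFinset (by simpa using hH)
  have hvH : v ∈ H.verts := by simpa using hv.1
  exact (minDeg_le_ncard_neighborSet _ ⟨v, hvH⟩).trans_lt
    (hv.ncard_neighborSet_lt_cliqueNum (by simp) hvH)

lemma IsClique.coe_induce_top {K : Set V} (hK : G.IsClique K) :
    ((⊤ : G.Subgraph).induce K).coe = ⊤ := by
  rw [← induce_eq_coe_induce_top, induce_eq_top.mpr hK]
  rfl

lemma exists_subgraph_minDeg_eq_and_vertexConn_eq [Finite V] [Nonempty V] :
    ∃ H : G.Subgraph, minDeg H.coe = G.cliqueNum - 1 ∧ vertexConn H.coe = G.cliqueNum - 1 := by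
  obtain ⟨K, hKcl, hKcard⟩ := G.exists_isNClique_cliqueNum
  have hcard : Nat.card ((⊤ : G.Subgraph).induce K).verts = G.cliqueNum := by simp [hKcard]
  have : Nonempty ((⊤ : G.Subgraph).induce K).verts :=
    (Nat.card_pos_iff.mp (hcard ▸ cliqueNum_pos)).1
  refine ⟨(⊤ : G.Subgraph).induce K, ?_, ?_⟩ <;> rw [hKcl.coe_induce_top, ← hcard]
  exacts [minDeg_top, vertexConn_top]

end Cliques

section GaussianRank

open Matrix

variable {V : Type*} [Fintype V] [DecidableEq V] {G : SimpleGraph V}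

/-- Remove a simplicial vertex `v` of `s`, complete on the rest, and put `v` back with
`exists_posDef_update_row`: its closed neighbourhood in `s` is a clique. -/
theorem exists_posDef_eqOn_of_isSimplicialIn
    (hG : ∀ s : Finset V, s.Nonempty → ∃ v, G.IsSimplicialIn s v) {A : Matrix V V ℝ}
    (hA : A.IsHermitian) (hAK : ∀ K : Finset V, G.IsClique (K : Set V) → PosDefOn A K)
    (s : Finset V) :
    ∃ P : Matrix V V ℝ, P.PosDef ∧
      ∀ i ∈ s, ∀ j ∈ s, (i = j ∨ G.Adj i j) → P i j = A i j := by
  classical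
  induction s using Finset.strongInduction with | H s ih =>
  rcases s.eq_empty_or_nonempty with rfl | hs
  · exact ⟨1, PosDef.one, by simp⟩
  obtain ⟨v, hv⟩ := hG s hs
  obtain ⟨P', hP', hP'A⟩ := ih (s.erase v) (Finset.erase_ssubset hv.1)
  set C := (s.erase v).filter (G.Adj v)
  have hmemC : ∀ {x}, x ∈ s → G.Adj v x → x ∈ C := fun hx hvx =>
    Finset.mem_filter.mpr ⟨Finset.mem_erase.mpr ⟨hvx.ne.symm, hx⟩, hvx⟩
  have hvC : v ∉ C := fun h => G.irrefl (Finset.mem_filter.mp h).2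
  have hK : G.IsClique (↑(insert v C) : Set V) := by
    refine hv.isClique_insert.subset ?_
    intro x
    simp only [C, Finset.coe_insert, Finset.coe_filter, Finset.mem_erase, Set.mem_insert_iff,
      Set.mem_ofPred_eq]
    tauto
  obtain ⟨P, hP, hPP', hPv⟩ := exists_posDef_update_row hA hP' hvC (by simpa using hAK _ hK)
    fun x hx y hy => by
      simp only [C, Finset.mem_filter] at hx hy
      refine hP'A x hx.1 y hy.1 ?_
      by_cases hxy : x = y
      · exact .inl hxy
      · exact .inr (hv.2 ⟨Finset.mem_of_mem_erase hx.1, hx.2⟩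
          ⟨Finset.mem_of_mem_erase hy.1, hy.2⟩ hxy)
  have hrow : ∀ j ∈ s, (j = v ∨ G.Adj v j) → P v j = A v j := fun j hj hvj =>
    hPv j (by rcases hvj with rfl | hvj <;> simp [hmemC hj, *])
  refine ⟨P, hP, fun i hi j hj hij => ?_⟩
  by_cases hiv : i = v
  · subst hiv
    exact hrow j hj (hij.imp Eq.symm id)
  by_cases hjv : j = v
  · subst hjv
    rw [hP.1.apply_comm, hrow i hi (hij.imp id Adj.symm), hA.apply_comm]
  rw [hPP' i j hiv hjv]
  exact hP'A i (Finset.mem_erase.mpr ⟨hiv, hi⟩) j (Finset.mem_erase.mpr ⟨hjv, hj⟩) hij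

lemma not_gRankProp_of_isClique {K : Finset V} (hK : G.IsClique (K : Set V)) {r : ℕ}
    (hr : r < K.card) : ¬GRankProp G r := by
  intro hGr
  obtain ⟨A, hA⟩ := exists_inGenPos (hr.le.trans (Finset.card_le_univ K))
  obtain ⟨P, hP, hPdiag, hPedge⟩ := hGr A hA
  obtain ⟨β, hβK, hβ⟩ := Finset.exists_subset_card_eq (Nat.succ_le_of_lt hr)
  have hPA : P.submatrix ((↑) : β → V) ((↑) : β → V) = A.submatrix (↑) (↑) := by
    ext i j
    by_cases hij : (i : V) = j
    · simp [hij, hPdiag]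
    · exact hPedge i j (hK (hβK i.2) (hβK j.2) hij)
  have hdet : (A.submatrix ((↑) : β → V) ((↑) : β → V)).det ≠ 0 :=
    hPA ▸ (hP.submatrix Subtype.val_injective).det_pos.ne'
  have := card_le_rank_of_det_submatrix_ne_zero hdet
  rw [hβ, hA.2.1] at this
  omega

lemma gRankProp_cliqueNum (hG : ∀ s : Finset V, s.Nonempty → ∃ v, G.IsSimplicialIn s v) :
    GRankProp G G.cliqueNum := by
  intro A hA
  obtain ⟨P, hP, hPA⟩ := exists_posDef_eqOn_of_isSimplicialIn hG hA.1.1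
    (fun K hK => hA.posDefOn hK.card_le_cliqueNum) Finset.univ
  exact ⟨P, hP, fun i => hPA i (by simp) i (by simp) (.inl rfl),
    fun i j hij => hPA i (by simp) j (by simp) (.inr hij)⟩

lemma gaussianRank_eq_cliqueNum [Nonempty V]
    (hG : ∀ s : Finset V, s.Nonempty → ∃ v, G.IsSimplicialIn s v) :
    gaussianRank G = G.cliqueNum := by
  obtain ⟨K, hKcl, hKcard⟩ := G.exists_isNClique_cliqueNum
  exact IsLeast.csInf_eq ⟨⟨cliqueNum_pos, gRankProp_cliqueNum hG⟩, fun r ⟨_, hr⟩ =>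
    not_lt.mp fun hlt => not_gRankProp_of_isClique hKcl (hKcard ▸ hlt) hr⟩

end GaussianRank

end SimpleGraph

/-- For a finite simple chordal graph `G` (no induced cycle of length four
or more), `κ*(G) + 1 = δ*(G) + 1 = ω(G)`, and consequently `r(G) = ω(G)`. -/
theorem gaussianRank_of_chordal {V : Type*} [Fintype V] [DecidableEq V] [Nonempty V]
    (G : SimpleGraph V)
    (hchordal : ∀ n : ℕ, 4 ≤ n → ∀ s : Set V,
      IsEmpty (G.induce s ≃g SimpleGraph.cycleGraph n)) :
    subgraphConn G + 1 = G.cliqueNum ∧ degeneracy G + 1 = G.cliqueNum ∧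
      gaussianRank G = G.cliqueNum := by
  have hG : ∀ s : Finset V, s.Nonempty → ∃ v, G.IsSimplicialIn s v :=
    fun _ => SimpleGraph.IsChordal.exists_isSimplicialIn hchordal
  have hδ : ∀ H : G.Subgraph, minDeg H.coe < G.cliqueNum :=
    SimpleGraph.minDeg_coe_lt_cliqueNum hG
  obtain ⟨K, hKdeg, hKconn⟩ := SimpleGraph.exists_subgraph_minDeg_eq_and_vertexConn_eq (G := G)
  have hω := SimpleGraph.cliqueNum_pos (G := G)
  have hdeg : degeneracy G = G.cliqueNum - 1 :=
    IsGreatest.csSup_eq ⟨⟨K, hKdeg⟩, by rintro _ ⟨H, rfl⟩; have := hδ H; omega⟩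
  have hconn : subgraphConn G = G.cliqueNum - 1 :=
    IsGreatest.csSup_eq ⟨⟨K, hKconn⟩, by
      rintro _ ⟨H, rfl⟩
      have := (vertexConn_le_minDeg H.coe).trans_lt (hδ H)
      omega⟩
  exact ⟨by omega, by omega, SimpleGraph.gaussianRank_eq_cliqueNum hG⟩
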